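/- Let d = 2 and a = (a₁, a₂) be homogeneous of degree −1 on ℝ². The matrix A with A_{h,k} = ∫_{S¹} a_h a_k dσ satisfies: the tensor contraction 𝔉(x):A (with 𝔉_{j;h,k}(x) = (Γ(2)/π)((δ_{j,h}x_k + δ_{h,k}x_j + δ_{k,j}x_h)|x|² − 4 x_j x_h x_k)/|x|⁶) vanishes identically for all x ≠ 0 if and only if ∫_{S¹} a₁² dσ = ∫_{S¹} a₂² dσ and ∫_{S¹} a₁ a₂ dσ = 0. -/

import Mathlib

/-!
Contracting `𝔉(x)` against a matrix `A` gives
`((A + Aᵀ)x + (tr A) x) |x|² − 4 x (xᵀ A x)` up to the factor `1 / (π |x|⁶)`.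
For `A = c I` this is `4c x |x|² − 4c x |x|² = 0`; at `x = e₁` its two components are
`A₂₂ − A₁₁` and `A₁₂ + A₂₁`, and the second moment matrix is symmetric.
-/

open MeasureTheory
open scoped BigOperators

/-- The surface measure on the unit circle `S¹ ⊂ ℝ²`. -/
noncomputable def circleMeasure :
    Measure (Metric.sphere (0 : EuclideanSpace ℝ (Fin 2)) 1) :=
  (volume : Measure (EuclideanSpace ℝ (Fin 2))).toSphere

/-- The tensor `𝔉_{j;h,k}` in dimension `2`:
`𝔉_{j;h,k}(x) = (Γ(2)/π)((δ_{j,h}x_k + δ_{h,k}x_j + δ_{k,j}x_h)|x|² − 4 x_j x_h x_k)/|x|⁶`. -/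
noncomputable def FF2 (j h k : Fin 2) (x : EuclideanSpace ℝ (Fin 2)) : ℝ :=
  Real.Gamma 2 / Real.pi *
    (((if j = h then (1 : ℝ) else 0) * x k + (if h = k then (1 : ℝ) else 0) * x j +
        (if k = j then (1 : ℝ) else 0) * x h) * ‖x‖ ^ 2
      - 4 * x j * x h * x k) / ‖x‖ ^ 6

lemma sum_FF2_mul (A : Fin 2 → Fin 2 → ℝ) (j : Fin 2) (x : EuclideanSpace ℝ (Fin 2)) :
    ∑ h, ∑ k, FF2 j h k x * A h k =
      ((∑ k, (A j k + A k j) * x k + x j * ∑ h, A h h) * ‖x‖ ^ 2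
        - 4 * x j * ∑ h, ∑ k, x h * A h k * x k) / (Real.pi * ‖x‖ ^ 6) := by
  simp only [FF2, Real.Gamma_two, Fin.sum_univ_two]
  fin_cases j <;> simp <;> ring

lemma EuclideanSpace.norm_sq_fin_two (x : EuclideanSpace ℝ (Fin 2)) :
    ‖x‖ ^ 2 = x 0 ^ 2 + x 1 ^ 2 := by
  simp [EuclideanSpace.norm_sq_eq, Fin.sum_univ_two]

lemma sum_FF2_mul_eq_zero_iff (A : Fin 2 → Fin 2 → ℝ) (hA : ∀ h k, A h k = A k h) :
    (∀ x : EuclideanSpace ℝ (Fin 2), x ≠ 0 → ∀ j, ∑ h, ∑ k, FF2 j h k x * A h k = 0) ↔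
      A 0 0 = A 1 1 ∧ A 0 1 = 0 := by
  constructor
  · intro H
    have he : EuclideanSpace.single (0 : Fin 2) (1 : ℝ) ≠ 0 := by simp
    have h₀ : A 1 1 - A 0 0 = 0 := by
      have := H _ he 0
      rw [sum_FF2_mul] at this
      simp [Fin.sum_univ_two, Real.pi_ne_zero] at this
      linear_combination this
    have h₁ : A 1 0 + A 0 1 = 0 := by
      have := H _ he 1
      rw [sum_FF2_mul] at this
      simpa [Fin.sum_univ_two, Real.pi_ne_zero] using this
    constructor <;> linarith [hA 1 0]
  · rintro ⟨hdiag, hoff⟩ x - j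
    have hoff' : A 1 0 = 0 := (hA 1 0).trans hoff
    rw [sum_FF2_mul, div_eq_zero_iff, EuclideanSpace.norm_sq_fin_two]
    left
    fin_cases j <;> simp [Fin.sum_univ_two, hdiag, hoff, hoff'] <;> ring

theorem stmt_18_general (a : EuclideanSpace ℝ (Fin 2) → Fin 2 → ℝ)
    (A : Fin 2 → Fin 2 → ℝ)
    (hA : ∀ h k : Fin 2, A h k =
      ∫ ω : Metric.sphere (0 : EuclideanSpace ℝ (Fin 2)) 1,
        a (ω : EuclideanSpace ℝ (Fin 2)) h * a (ω : EuclideanSpace ℝ (Fin 2)) k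
          ∂circleMeasure) :
    (∀ x : EuclideanSpace ℝ (Fin 2), x ≠ 0 → ∀ j : Fin 2,
        (∑ h : Fin 2, ∑ k : Fin 2, FF2 j h k x * A h k) = 0) ↔
      (A 0 0 = A 1 1 ∧ A 0 1 = 0) := by
  refine sum_FF2_mul_eq_zero_iff A fun h k => ?_
  simp only [hA, mul_comm]

theorem stmt_18 (a : EuclideanSpace ℝ (Fin 2) → Fin 2 → ℝ)
    (hhom : ∀ (c : ℝ), 0 < c → ∀ x : EuclideanSpace ℝ (Fin 2), a (c • x) = c⁻¹ • a x)
    (A : Fin 2 → Fin 2 → ℝ)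
    (hA : ∀ h k : Fin 2, A h k =
      ∫ ω : Metric.sphere (0 : EuclideanSpace ℝ (Fin 2)) 1,
        a (ω : EuclideanSpace ℝ (Fin 2)) h * a (ω : EuclideanSpace ℝ (Fin 2)) k
          ∂circleMeasure) :
    (∀ x : EuclideanSpace ℝ (Fin 2), x ≠ 0 → ∀ j : Fin 2,
        (∑ h : Fin 2, ∑ k : Fin 2, FF2 j h k x * A h k) = 0) ↔
      (A 0 0 = A 1 1 ∧ A 0 1 = 0) :=
  stmt_18_general a A hA
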